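/- arXiv:2307.05124 — 4 statements merged into one kernel-verified Lean document; each statement's English description precedes it below -/
import Mathlib

section
/- Let b : (0,∞) → (0,∞) be slowly varying, α > 0, and q ∈ (0,∞]. Then for all t > 0: ‖τ^{α - 1/q} b(τ)‖_{L_q(0,t)} ≈ t^α b(t) and ‖τ^{-α - 1/q} b(τ)‖_{L_q(t,∞)} ≈ t^{-α} b(t), with equivalence constants independent of t. -/
/-!
Slow variation with `ε = α / 2` yields Potter-type bounds: for `0 < τ ≤ t`,
`τ^ε b(τ) ≤ K t^ε b(t)` and `t^{-ε} b(t) ≤ K τ^{-ε} b(τ)`, because `τ^{±ε} b(τ)` is comparable to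
a monotone function. Writing `τ^{α-1/q} b(τ) = τ^{α∓ε-1/q} · τ^{±ε} b(τ)`, the weight `τ^{±ε} b(τ)`
is thus squeezed between multiples of `t^{±ε} b(t)` on `(0,t)`, and likewise on `(t,∞)`. Both
estimates reduce to the exact norms of pure powers,
`‖τ^{s-1/q}‖_{L_q(0,t)} = (sq)^{-1/q} t^s` and `‖τ^{-s-1/q}‖_{L_q(t,∞)} = (sq)^{-1/q} t^{-s}`
for `s = α ∓ ε > 0`, which are finite precisely because `ε < α`.
-/

open Set MeasureTheory ENNReal

/-- A measurable function `b : (0,∞) → (0,∞)` is slowly varying if for each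
`ε > 0` the function `t^ε b(t)` is equivalent (up to positive multiplicative
constants) to a non-decreasing function and `t^{-ε} b(t)` is equivalent to a
non-increasing function on `(0,∞)`. -/
def IsSlowlyVarying (b : ℝ → ℝ) : Prop :=
  Measurable b ∧ (∀ t : ℝ, 0 < t → 0 < b t) ∧
  ∀ ε : ℝ, 0 < ε →
    (∃ (g : ℝ → ℝ) (c C : ℝ), 0 < c ∧ 0 < C ∧ MonotoneOn g (Ioi 0) ∧
      ∀ t : ℝ, 0 < t → c * g t ≤ t ^ ε * b t ∧ t ^ ε * b t ≤ C * g t) ∧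
    (∃ (g : ℝ → ℝ) (c C : ℝ), 0 < c ∧ 0 < C ∧ AntitoneOn g (Ioi 0) ∧
      ∀ t : ℝ, 0 < t → c * g t ≤ t ^ (-ε) * b t ∧ t ^ (-ε) * b t ≤ C * g t)

section Sandwich

variable {ι : Type*} [Preorder ι] {s : Set ι} {f g : ι → ℝ} {c C : ℝ} {x y : ι}

lemma MonotoneOn.le_mul_of_sandwich (hg : MonotoneOn g s) (hc : 0 < c) (hC : 0 ≤ C)
    (hfg : ∀ z ∈ s, c * g z ≤ f z ∧ f z ≤ C * g z) (hx : x ∈ s) (hy : y ∈ s) (hxy : x ≤ y) :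
    f x ≤ C / c * f y :=
  calc f x ≤ C * g x := (hfg x hx).2
    _ ≤ C * g y := mul_le_mul_of_nonneg_left (hg hx hy hxy) hC
    _ = C / c * (c * g y) := by field_simp
    _ ≤ C / c * f y := mul_le_mul_of_nonneg_left (hfg y hy).1 (by positivity)

lemma AntitoneOn.le_mul_of_sandwich (hg : AntitoneOn g s) (hc : 0 < c) (hC : 0 ≤ C)
    (hfg : ∀ z ∈ s, c * g z ≤ f z ∧ f z ≤ C * g z) (hx : x ∈ s) (hy : y ∈ s) (hxy : x ≤ y) :
    f y ≤ C / c * f x :=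
  MonotoneOn.le_mul_of_sandwich (ι := ιᵒᵈ) hg.dual_left hc hC hfg hy hx hxy

end Sandwich

theorem IsSlowlyVarying.exists_potter_bounds {b : ℝ → ℝ} (hb : IsSlowlyVarying b) {ε : ℝ}
    (hε : 0 < ε) :
    ∃ K > 0, ∀ ⦃τ t : ℝ⦄, 0 < τ → τ ≤ t →
      τ ^ ε * b τ ≤ K * (t ^ ε * b t) ∧ t ^ (-ε) * b t ≤ K * (τ ^ (-ε) * b τ) := by
  obtain ⟨-, hb0, hsv⟩ := hb
  obtain ⟨⟨g, c, C, hc, hC, hg, hbg⟩, ⟨h, c', C', hc', hC', hh, hbh⟩⟩ := hsv ε hε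
  refine ⟨max (C / c) (C' / c'), by positivity, fun τ t hτ hτt => ?_⟩
  have ht : 0 < t := hτ.trans_le hτt
  constructor
  · calc τ ^ ε * b τ ≤ C / c * (t ^ ε * b t) := hg.le_mul_of_sandwich hc hC.le hbg hτ ht hτt
      _ ≤ _ := mul_le_mul_of_nonneg_right (le_max_left _ _)
          (mul_pos (Real.rpow_pos_of_pos ht _) (hb0 t ht)).le
  · calc t ^ (-ε) * b t ≤ C' / c' * (τ ^ (-ε) * b τ) :=
          hh.le_mul_of_sandwich hc' hC'.le hbh hτ ht hτt
      _ ≤ _ := mul_le_mul_of_nonneg_right (le_max_right _ _)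
          (mul_pos (Real.rpow_pos_of_pos hτ _) (hb0 τ hτ)).le

lemma lintegral_rpow_Ioo {s t : ℝ} (hs : 0 < s) (ht : 0 ≤ t) :
    ∫⁻ x in Ioo 0 t, ENNReal.ofReal (x ^ (s - 1)) = ENNReal.ofReal (t ^ s / s) := by
  have hint : IntegrableOn (fun x : ℝ => x ^ (s - 1)) (Ioc 0 t) :=
    (intervalIntegrable_iff_integrableOn_Ioc_of_le ht).1
      (intervalIntegral.intervalIntegrable_rpow' (by linarith))
  rw [Measure.restrict_congr_set Ioo_ae_eq_Ioc, ← ofReal_integral_eq_lintegral_ofReal hint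
    (ae_restrict_of_forall_mem measurableSet_Ioc fun x hx => Real.rpow_nonneg hx.1.le _),
    ← intervalIntegral.integral_of_le ht, integral_rpow (Or.inl (by linarith)),
    sub_add_cancel, Real.zero_rpow hs.ne', sub_zero]

lemma lintegral_rpow_Ioi {s t : ℝ} (hs : 0 < s) (ht : 0 < t) :
    ∫⁻ x in Ioi t, ENNReal.ofReal (x ^ (-s - 1)) = ENNReal.ofReal (t ^ (-s) / s) := by
  rw [← ofReal_integral_eq_lintegral_ofReal (integrableOn_Ioi_rpow_of_lt (by linarith) ht)
    (ae_restrict_of_forall_mem measurableSet_Ioi fun x hx => Real.rpow_nonneg (ht.trans hx).le _),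
    integral_Ioi_rpow_of_lt (by linarith) ht, sub_add_cancel, neg_div, div_neg, neg_neg]

lemma enorm_rpow_rpow {x : ℝ} (hx : 0 ≤ x) (a : ℝ) {p : ℝ} (hp : 0 ≤ p) :
    ‖x ^ a‖ₑ ^ p = ENNReal.ofReal (x ^ (a * p)) := by
  rw [Real.enorm_of_nonneg (Real.rpow_nonneg hx _),
    ENNReal.ofReal_rpow_of_nonneg (Real.rpow_nonneg hx _) hp, ← Real.rpow_mul hx]

lemma rpow_mul_div_rpow_inv {t u v p : ℝ} (ht : 0 ≤ t) (hv : 0 ≤ v) (hp : p ≠ 0) :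
    (t ^ (u * p) / v) ^ p⁻¹ = v ^ (-p⁻¹) * t ^ u := by
  rw [div_eq_mul_inv, Real.mul_rpow (by positivity) (by positivity), ← Real.rpow_mul ht,
    Real.inv_rpow hv, ← Real.rpow_neg hv, mul_inv_cancel_right₀ hp, mul_comm]

section FiniteExponent

variable {q : ℝ≥0∞} {s t : ℝ}

lemma eLpNorm_rpow_Ioo_of_ne_top (hq0 : q ≠ 0) (hq : q ≠ ∞) (hs : 0 < s) (ht : 0 < t) :
    eLpNorm (fun x : ℝ => x ^ (s - q.toReal⁻¹)) q (volume.restrict (Ioo 0 t)) =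
      ENNReal.ofReal ((s * q.toReal) ^ (-q.toReal⁻¹) * t ^ s) := by
  have hp : 0 < q.toReal := ENNReal.toReal_pos hq0 hq
  rw [eLpNorm_eq_lintegral_rpow_enorm_toReal hq0 hq,
    setLIntegral_congr_fun measurableSet_Ioo fun x hx => enorm_rpow_rpow hx.1.le _ hp.le]
  simp_rw [sub_mul, inv_mul_cancel₀ hp.ne']
  rw [lintegral_rpow_Ioo (by positivity) ht.le, one_div,
    ENNReal.ofReal_rpow_of_nonneg (by positivity) (by positivity),
    rpow_mul_div_rpow_inv ht.le (by positivity) hp.ne']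

lemma eLpNorm_rpow_Ioi_of_ne_top (hq0 : q ≠ 0) (hq : q ≠ ∞) (hs : 0 < s) (ht : 0 < t) :
    eLpNorm (fun x : ℝ => x ^ (-s - q.toReal⁻¹)) q (volume.restrict (Ioi t)) =
      ENNReal.ofReal ((s * q.toReal) ^ (-q.toReal⁻¹) * t ^ (-s)) := by
  have hp : 0 < q.toReal := ENNReal.toReal_pos hq0 hq
  rw [eLpNorm_eq_lintegral_rpow_enorm_toReal hq0 hq,
    setLIntegral_congr_fun measurableSet_Ioi fun x hx => enorm_rpow_rpow (ht.trans hx).le _ hp.le]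
  simp_rw [sub_mul, inv_mul_cancel₀ hp.ne', neg_mul]
  rw [lintegral_rpow_Ioi (by positivity) ht, one_div,
    ENNReal.ofReal_rpow_of_nonneg (by positivity) (by positivity), ← neg_mul,
    rpow_mul_div_rpow_inv ht.le (by positivity) hp.ne']

end FiniteExponent

lemma ContinuousOn.enorm_le_eLpNorm_top {X E : Type*} [TopologicalSpace X] [MeasurableSpace X]
    {μ : Measure X} [μ.IsOpenPosMeasure] [TopologicalSpace E] [ContinuousENorm E] {f : X → E}
    {s : Set X} (hf : ContinuousOn f s) (hs : s ⊆ closure (interior s)) {x : X} (hx : x ∈ s) :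
    ‖f x‖ₑ ≤ eLpNorm f ∞ (μ.restrict s) := by
  have hcont : ContinuousOn (fun y => ‖f y‖ₑ) s := continuous_enorm.comp_continuousOn hf
  have hae : (fun y => min ‖f y‖ₑ (eLpNorm f ∞ (μ.restrict s))) =ᵐ[μ.restrict s]
      fun y => ‖f y‖ₑ := by
    filter_upwards [ae_le_eLpNormEssSup (f := f)] with y hy
    rw [eLpNorm_exponent_top]
    exact min_eq_left hy
  exact min_eq_left_iff.mp (Measure.eqOn_of_ae_eq hae (hcont.inf continuousOn_const) hcont hs hx)

lemma eLpNorm_top_rpow_Ioo {s t : ℝ} (hs : 0 ≤ s) (ht : 0 < t) :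
    eLpNorm (fun x : ℝ => x ^ s) ∞ (volume.restrict (Ioo 0 t)) = ENNReal.ofReal (t ^ s) := by
  refine le_antisymm ?_ ?_
  · rw [eLpNorm_exponent_top]
    refine eLpNormEssSup_le_of_ae_bound (ae_restrict_of_forall_mem measurableSet_Ioo fun x hx => ?_)
    rw [Real.norm_of_nonneg (Real.rpow_nonneg hx.1.le _)]
    exact Real.rpow_le_rpow hx.1.le hx.2.le hs
  · rw [Measure.restrict_congr_set Ioo_ae_eq_Ioc, ← Real.enorm_of_nonneg (by positivity)]
    exact (Real.continuous_rpow_const hs).continuousOn.enorm_le_eLpNorm_top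
      (Ioc_subset_closure_interior 0 t) (right_mem_Ioc.2 ht)

lemma eLpNorm_top_rpow_Ioi {s t : ℝ} (hs : 0 ≤ s) (ht : 0 < t) :
    eLpNorm (fun x : ℝ => x ^ (-s)) ∞ (volume.restrict (Ioi t)) = ENNReal.ofReal (t ^ (-s)) := by
  refine le_antisymm ?_ ?_
  · rw [eLpNorm_exponent_top]
    refine eLpNormEssSup_le_of_ae_bound (ae_restrict_of_forall_mem measurableSet_Ioi fun x hx => ?_)
    rw [Real.norm_of_nonneg (Real.rpow_nonneg (ht.trans hx).le _)]
    exact Real.rpow_le_rpow_of_nonpos ht hx.le (neg_nonpos.2 hs)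
  · have hcont : ContinuousOn (fun x : ℝ => x ^ (-s)) (Ici t) := fun x hx =>
      (Real.continuousAt_rpow_const x _ (Or.inl (ht.trans_le hx).ne')).continuousWithinAt
    rw [Measure.restrict_congr_set Ioi_ae_eq_Ici, ← Real.enorm_of_nonneg (by positivity)]
    exact hcont.enorm_le_eLpNorm_top (by rw [interior_Ici, closure_Ioi]) self_mem_Ici

lemma exists_eLpNorm_rpow_eq {q : ℝ≥0∞} (hq : q ≠ 0) {s : ℝ} (hs : 0 < s) :
    ∃ κ > 0, ∀ t > 0,
      eLpNorm (fun x : ℝ => x ^ (s - (1 / q).toReal)) q (volume.restrict (Ioo 0 t)) =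
          ENNReal.ofReal (κ * t ^ s) ∧
        eLpNorm (fun x : ℝ => x ^ (-s - (1 / q).toReal)) q (volume.restrict (Ioi t)) =
          ENNReal.ofReal (κ * t ^ (-s)) := by
  rcases eq_or_ne q ∞ with rfl | hqtop
  · refine ⟨1, one_pos, fun t ht => ?_⟩
    simp only [div_top, toReal_zero, sub_zero, one_mul]
    exact ⟨eLpNorm_top_rpow_Ioo hs.le ht, eLpNorm_top_rpow_Ioi hs.le ht⟩
  · have hp : 0 < q.toReal := ENNReal.toReal_pos hq hqtop
    refine ⟨(s * q.toReal) ^ (-q.toReal⁻¹), by positivity, fun t ht => ?_⟩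
    rw [one_div, ENNReal.toReal_inv]
    exact ⟨eLpNorm_rpow_Ioo_of_ne_top hq hqtop hs ht, eLpNorm_rpow_Ioi_of_ne_top hq hqtop hs ht⟩

section WeightedNorm

variable {X : Type*} [MeasurableSpace X] {μ : Measure X} {g φ : X → ℝ} {m M : ℝ}

lemma eLpNorm_mul_le_of_ae_norm_le (h : ∀ᵐ x ∂μ, ‖φ x‖ ≤ M) (p : ℝ≥0∞) :
    eLpNorm (fun x => g x * φ x) p μ ≤ ENNReal.ofReal M * eLpNorm g p μ :=
  eLpNorm_le_mul_eLpNorm_of_ae_le_mul (h.mono fun x hx => by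
    rw [norm_mul, mul_comm]
    exact mul_le_mul_of_nonneg_right hx (norm_nonneg _)) p

lemma ofReal_mul_eLpNorm_le_of_ae_le (h : ∀ᵐ x ∂μ, m ≤ φ x) (p : ℝ≥0∞) :
    ENNReal.ofReal m * eLpNorm g p μ ≤ eLpNorm (fun x => g x * φ x) p μ := by
  rcases le_or_gt m 0 with hm | hm
  · simp [ENNReal.ofReal_of_nonpos hm]
  · rw [← Real.enorm_of_nonneg hm.le, ← eLpNorm_const_smul]
    refine eLpNorm_mono_ae (h.mono fun x hx => ?_)
    rw [Pi.smul_apply, smul_eq_mul, norm_mul, norm_mul, mul_comm, Real.norm_of_nonneg hm.le,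
      Real.norm_of_nonneg (hm.le.trans hx)]
    exact mul_le_mul_of_nonneg_left hx (norm_nonneg _)

end WeightedNorm

lemma rpow_sub_mul_eq {τ : ℝ} (hτ : 0 < τ) {β γ σ : ℝ} (h : γ + σ = β) (r x : ℝ) :
    τ ^ (β - r) * x = τ ^ (σ - r) * (τ ^ γ * x) := by
  rw [← mul_assoc, ← Real.rpow_add hτ, ← h]
  ring_nf

section PowerWeight

variable {S : Set ℝ} {b : ℝ → ℝ} {q : ℝ≥0∞} {β γ σ r t K κ : ℝ}

lemma eLpNorm_rpow_mul_le (hS : MeasurableSet S) (hS0 : S ⊆ Ioi 0) (h : γ + σ = β) (ht : 0 < t)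
    (hκ : 0 ≤ κ)
    (hnorm : eLpNorm (fun x => x ^ (σ - r)) q (volume.restrict S) ≤ ENNReal.ofReal (κ * t ^ σ))
    (hb : ∀ τ ∈ S, 0 ≤ b τ ∧ τ ^ γ * b τ ≤ K * (t ^ γ * b t)) :
    eLpNorm (fun τ => τ ^ (β - r) * b τ) q (volume.restrict S) ≤
      ENNReal.ofReal (K * κ * (t ^ β * b t)) := by
  have hbound : ∀ᵐ τ ∂volume.restrict S, ‖τ ^ γ * b τ‖ ≤ K * (t ^ γ * b t) :=
    ae_restrict_of_forall_mem hS fun τ hτ => by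
      rw [Real.norm_of_nonneg (mul_nonneg (Real.rpow_nonneg (hS0 hτ).le _) (hb τ hτ).1)]
      exact (hb τ hτ).2
  calc eLpNorm (fun τ => τ ^ (β - r) * b τ) q (volume.restrict S)
      = eLpNorm (fun τ => τ ^ (σ - r) * (τ ^ γ * b τ)) q (volume.restrict S) :=
        eLpNorm_congr_ae (ae_restrict_of_forall_mem hS fun τ hτ => rpow_sub_mul_eq (hS0 hτ) h _ _)
    _ ≤ ENNReal.ofReal (K * (t ^ γ * b t)) * ENNReal.ofReal (κ * t ^ σ) :=
        (eLpNorm_mul_le_of_ae_norm_le hbound q).trans (mul_le_mul_right hnorm _)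
    _ = ENNReal.ofReal (K * κ * (t ^ β * b t)) := by
        rw [← ENNReal.ofReal_mul' (by positivity), ← h, Real.rpow_add ht]
        ring_nf

lemma ofReal_mul_le_eLpNorm_rpow_mul (hS : MeasurableSet S) (hS0 : S ⊆ Ioi 0) (h : γ + σ = β)
    (ht : 0 < t) (hK : 0 < K) (hκ : 0 ≤ κ)
    (hnorm : ENNReal.ofReal (κ * t ^ σ) ≤ eLpNorm (fun x => x ^ (σ - r)) q (volume.restrict S))
    (hb : ∀ τ ∈ S, t ^ γ * b t ≤ K * (τ ^ γ * b τ)) :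
    ENNReal.ofReal (K⁻¹ * κ * (t ^ β * b t)) ≤
      eLpNorm (fun τ => τ ^ (β - r) * b τ) q (volume.restrict S) := by
  have hbound : ∀ᵐ τ ∂volume.restrict S, K⁻¹ * (t ^ γ * b t) ≤ τ ^ γ * b τ :=
    ae_restrict_of_forall_mem hS fun τ hτ => by
      rw [inv_mul_le_iff₀ hK]
      exact hb τ hτ
  calc ENNReal.ofReal (K⁻¹ * κ * (t ^ β * b t))
      = ENNReal.ofReal (K⁻¹ * (t ^ γ * b t)) * ENNReal.ofReal (κ * t ^ σ) := by
        rw [← ENNReal.ofReal_mul' (by positivity), ← h, Real.rpow_add ht]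
        ring_nf
    _ ≤ eLpNorm (fun τ => τ ^ (σ - r) * (τ ^ γ * b τ)) q (volume.restrict S) :=
        (mul_le_mul_right hnorm _).trans (ofReal_mul_eLpNorm_le_of_ae_le hbound q)
    _ = eLpNorm (fun τ => τ ^ (β - r) * b τ) q (volume.restrict S) :=
        eLpNorm_congr_ae (ae_restrict_of_forall_mem hS fun τ hτ =>
          (rpow_sub_mul_eq (hS0 hτ) h _ _).symm)

end PowerWeight

/-- If `b` is slowly varying, `α > 0`, and `q ∈ (0,∞]`, then for all
`t > 0`, `‖τ^{α-1/q} b(τ)‖_{L_q(0,t)} ≈ t^α b(t)` and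
`‖τ^{-α-1/q} b(τ)‖_{L_q(t,∞)} ≈ t^{-α} b(t)`, with equivalence constants
independent of `t`. (For `q = ∞` one has `1/q = 0` and the `L_q` norm is the
essential supremum, as encoded by `eLpNorm`.) -/
theorem slowly_varying_Lq_norms (b : ℝ → ℝ) (hb : IsSlowlyVarying b)
    (α : ℝ) (hα : 0 < α) (q : ℝ≥0∞) (hq : 0 < q) :
    ∃ c C : ℝ, 0 < c ∧ 0 < C ∧ ∀ t : ℝ, 0 < t →
      (ENNReal.ofReal (c * (t ^ α * b t)) ≤
          eLpNorm (fun τ : ℝ => τ ^ (α - (1 / q).toReal) * b τ) q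
            (volume.restrict (Ioo 0 t)) ∧
        eLpNorm (fun τ : ℝ => τ ^ (α - (1 / q).toReal) * b τ) q
            (volume.restrict (Ioo 0 t)) ≤
          ENNReal.ofReal (C * (t ^ α * b t))) ∧
      (ENNReal.ofReal (c * (t ^ (-α) * b t)) ≤
          eLpNorm (fun τ : ℝ => τ ^ (-α - (1 / q).toReal) * b τ) q
            (volume.restrict (Ioi t)) ∧
        eLpNorm (fun τ : ℝ => τ ^ (-α - (1 / q).toReal) * b τ) q
            (volume.restrict (Ioi t)) ≤
          ENNReal.ofReal (C * (t ^ (-α) * b t))) := by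
  obtain ⟨K, hK, hpotter⟩ := hb.exists_potter_bounds (half_pos hα)
  obtain ⟨κ, hκ, hnorm⟩ := exists_eLpNorm_rpow_eq hq.ne' (half_pos hα)
  obtain ⟨κ', hκ', hnorm'⟩ := exists_eLpNorm_rpow_eq hq.ne' (by positivity : 0 < α + α / 2)
  have hb0 : ∀ τ > 0, 0 ≤ b τ := fun τ hτ => (hb.2.1 τ hτ).le
  refine ⟨K⁻¹ * κ', K * κ, by positivity, by positivity, fun t ht => ⟨⟨?_, ?_⟩, ?_, ?_⟩⟩
  · exact ofReal_mul_le_eLpNorm_rpow_mul measurableSet_Ioo (fun τ hτ => hτ.1) (by ring) ht hK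
      hκ'.le (hnorm' t ht).1.ge fun τ hτ => (hpotter hτ.1 hτ.2.le).2
  · exact eLpNorm_rpow_mul_le measurableSet_Ioo (fun τ hτ => hτ.1) (by ring) ht hκ.le
      (hnorm t ht).1.le fun τ hτ => ⟨hb0 τ hτ.1, (hpotter hτ.1 hτ.2.le).1⟩
  · exact ofReal_mul_le_eLpNorm_rpow_mul measurableSet_Ioi (fun τ hτ => ht.trans hτ) (by ring) ht
      hK hκ'.le (hnorm' t ht).2.ge fun τ hτ => (hpotter ht hτ.le).1
  · exact eLpNorm_rpow_mul_le measurableSet_Ioi (fun τ hτ => ht.trans hτ) (by ring) ht hκ.le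
      (hnorm t ht).2.le fun τ hτ => ⟨hb0 τ (ht.trans hτ), (hpotter ht hτ.le).2⟩
end

section
/- Let f be a measurable function on ℝⁿ with f ∈ L₁ + L_∞, let f*(t) denote its non-increasing rearrangement and f**(t) := (1/t)∫₀^t f*(s) ds. Then the function t ↦ t(f**(t) - f*(t)) is non-decreasing on (0,∞). -/
/-!
For `a < b`, monotonicity of `f*` gives `∫_a^b f* ≥ (b - a) f*(b)` and `a f*(a) ≥ a f*(b)`,
which add up to `∫_0^a f* - a f*(a) ≤ ∫_0^b f* - b f*(b)`. The content is that `f*` is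
locally integrable: writing `f = g + h` with `g ∈ L¹` and `‖h‖ ≤ M` a.e., one has
`f* ≤ g* + M`, and `∫_0^∞ g* ≤ ‖g‖₁` by the layer-cake formula, because
`{t > 0 | s < g*(t)} ⊆ (0, μ{s < |g|})`.
-/

open Set MeasureTheory

/-- The non-increasing rearrangement of `f` with respect to the measure `μ`:
`f*(t) = inf { s ≥ 0 : μ{ |f| > s } ≤ t }`. -/
noncomputable def rearr {α : Type*} [MeasurableSpace α] (μ : Measure α)
    (f : α → ℝ) (t : ℝ) : ℝ :=
  sInf {s : ℝ | 0 ≤ s ∧ μ {x | s < |f x|} ≤ ENNReal.ofReal t}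

theorem AntitoneOn.monotoneOn_integral_sub_mul {φ : ℝ → ℝ} (hφ : AntitoneOn φ (Ioi 0))
    (hint : ∀ t, 0 < t → IntervalIntegrable φ volume 0 t) :
    MonotoneOn (fun t => (∫ s in Ioo 0 t, φ s) - t * φ t) (Ioi 0) := by
  intro a (ha : 0 < a) b (hb : 0 < b) hab
  have hab_int : IntervalIntegrable φ volume a b :=
    (hint b hb).mono_set (uIcc_subset_uIcc (mem_uIcc_of_le ha.le hab) right_mem_uIcc)
  have htail : (b - a) * φ b ≤ ∫ s in a..b, φ s := by
    simpa using intervalIntegral.integral_mono_on hab intervalIntegrable_const hab_int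
      fun s hs => hφ (ha.trans_le hs.1) hb hs.2
  have hsplit : ∫ s in Ioo 0 b, φ s = (∫ s in Ioo 0 a, φ s) + ∫ s in a..b, φ s := by
    simp only [← integral_Ioc_eq_integral_Ioo, ← intervalIntegral.integral_of_le ha.le,
      ← intervalIntegral.integral_of_le hb.le]
    exact (intervalIntegral.integral_add_adjacent_intervals (hint a ha) hab_int).symm
  have hφab : a * φ b ≤ a * φ a := mul_le_mul_of_nonneg_left (hφ ha hb hab) ha.le
  dsimp only
  rw [hsplit]
  linarith

section Rearrangement

variable {α : Type*} [MeasurableSpace α] {μ : Measure α} {f g h : α → ℝ} {s t M : ℝ}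

lemma rearr_nonneg (t : ℝ) : 0 ≤ rearr μ f t :=
  Real.sInf_nonneg fun _ hs => hs.1

lemma rearr_le_of_measure_le (hs : 0 ≤ s) (hst : μ {x | s < |f x|} ≤ ENNReal.ofReal t) :
    rearr μ f t ≤ s :=
  csInf_le ⟨0, fun _ hr => hr.1⟩ ⟨hs, hst⟩

lemma ofReal_lt_measure_of_lt_rearr (hs : 0 ≤ s) (hst : s < rearr μ f t) :
    ENNReal.ofReal t < μ {x | s < |f x|} := by
  contrapose! hst
  exact rearr_le_of_measure_le hs hst

lemma rearr_antitoneOn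
    (hne : ∀ t, 0 < t → ∃ s, 0 ≤ s ∧ μ {x | s < |f x|} ≤ ENNReal.ofReal t) :
    AntitoneOn (rearr μ f) (Ioi 0) := by
  intro a ha b _ hab
  exact le_csInf (hne a ha) fun r hr =>
    rearr_le_of_measure_le hr.1 (hr.2.trans (ENNReal.ofReal_le_ofReal hab))

lemma volume_lt_rearr_le (hs : 0 ≤ s) :
    volume.restrict (Ioi 0) {t | s < rearr μ f t} ≤ μ {x | s < |f x|} := by
  rw [Measure.restrict_apply' measurableSet_Ioi]
  rcases eq_top_or_lt_top (μ {x | s < |f x|}) with htop | hfin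
  · simp [htop]
  calc volume ({t | s < rearr μ f t} ∩ Ioi 0)
      ≤ volume (Ioo 0 (μ {x | s < |f x|}).toReal) :=
        measure_mono fun t ⟨ht, ht0⟩ => ⟨ht0, (ENNReal.ofReal_lt_iff_lt_toReal (le_of_lt ht0)
          hfin.ne).mp (ofReal_lt_measure_of_lt_rearr hs ht)⟩
    _ = μ {x | s < |f x|} := by simp [hfin.ne]

theorem lintegral_rearr_le (hf : AEMeasurable f μ) (hanti : AntitoneOn (rearr μ f) (Ioi 0)) :
    ∫⁻ t in Ioi 0, ENNReal.ofReal (rearr μ f t) ≤ ∫⁻ x, ‖f x‖ₑ ∂μ := by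
  rw [lintegral_eq_lintegral_meas_lt _ (ae_of_all _ rearr_nonneg)
    (aemeasurable_restrict_of_antitoneOn measurableSet_Ioi hanti)]
  simp_rw [Real.enorm_eq_ofReal_abs]
  rw [lintegral_eq_lintegral_meas_lt μ (ae_of_all _ fun x => abs_nonneg (f x))
    (continuous_abs.measurable.comp_aemeasurable hf)]
  exact setLIntegral_mono' measurableSet_Ioi fun s hs => volume_lt_rearr_le (le_of_lt hs)

lemma MeasureTheory.Integrable.exists_measure_lt_abs_le (hf : Integrable f μ) (ht : 0 < t) :
    ∃ s, 0 ≤ s ∧ μ {x | s < |f x|} ≤ ENNReal.ofReal t := by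
  set L := ∫⁻ x, ‖f x‖ₑ ∂μ
  set s := (L.toReal + 1) / t
  have hs : 0 < s := by positivity
  refine ⟨s, hs.le, ?_⟩
  calc μ {x | s < |f x|} ≤ μ {x | ENNReal.ofReal s ≤ ‖f x‖ₑ} :=
        measure_mono fun x hx => by
          simpa [Real.enorm_eq_ofReal_abs] using ENNReal.ofReal_le_ofReal (le_of_lt hx)
    _ ≤ L / ENNReal.ofReal s :=
        meas_ge_le_lintegral_div hf.aemeasurable.enorm (by simpa using hs) ENNReal.ofReal_ne_top
    _ ≤ ENNReal.ofReal t := by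
        refine ENNReal.div_le_of_le_mul ?_
        rw [← ENNReal.ofReal_mul ht.le, mul_div_cancel₀ _ ht.ne']
        calc L = ENNReal.ofReal L.toReal := (ENNReal.ofReal_toReal hf.2.ne).symm
          _ ≤ ENNReal.ofReal (L.toReal + 1) := ENNReal.ofReal_le_ofReal (by linarith)

theorem MeasureTheory.Integrable.integrableOn_rearr (hf : Integrable f μ) :
    IntegrableOn (rearr μ f) (Ioi 0) := by
  have hanti := rearr_antitoneOn fun _ ht => hf.exists_measure_lt_abs_le ht
  refine ⟨(aemeasurable_restrict_of_antitoneOn measurableSet_Ioi hanti).aestronglyMeasurable,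
    ?_⟩
  rw [hasFiniteIntegral_iff_ofReal (ae_of_all _ rearr_nonneg)]
  exact (lintegral_rearr_le hf.aemeasurable hanti).trans_lt hf.2

lemma measure_lt_abs_add_le (hh : ∀ᵐ x ∂μ, ‖h x‖ ≤ M) (s : ℝ) :
    μ {x | s + M < |(g + h) x|} ≤ μ {x | s < |g x|} := by
  refine measure_mono_ae ?_
  filter_upwards [hh] with x hx (hlt : s + M < |g x + h x|)
  have := abs_add_le (g x) (h x)
  rw [Real.norm_eq_abs] at hx
  show s < |g x|
  linarith

lemma exists_measure_lt_abs_add_le (hM : 0 ≤ M) (hh : ∀ᵐ x ∂μ, ‖h x‖ ≤ M)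
    (hg : ∃ s, 0 ≤ s ∧ μ {x | s < |g x|} ≤ ENNReal.ofReal t) :
    ∃ s, 0 ≤ s ∧ μ {x | s < |(g + h) x|} ≤ ENNReal.ofReal t :=
  let ⟨s, hs, hst⟩ := hg
  ⟨s + M, add_nonneg hs hM, (measure_lt_abs_add_le hh s).trans hst⟩

lemma rearr_add_le (hM : 0 ≤ M) (hh : ∀ᵐ x ∂μ, ‖h x‖ ≤ M)
    (hg : ∃ s, 0 ≤ s ∧ μ {x | s < |g x|} ≤ ENNReal.ofReal t) :
    rearr μ (g + h) t ≤ rearr μ g t + M := by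
  rw [← sub_le_iff_le_add]
  exact le_csInf hg fun s hs => sub_le_iff_le_add.mpr <|
    rearr_le_of_measure_le (add_nonneg hs.1 hM) ((measure_lt_abs_add_le hh s).trans hs.2)

lemma MeasureTheory.Integrable.rearr_add_antitoneOn (hg : Integrable g μ) (hM : 0 ≤ M)
    (hh : ∀ᵐ x ∂μ, ‖h x‖ ≤ M) : AntitoneOn (rearr μ (g + h)) (Ioi 0) :=
  rearr_antitoneOn fun _ ht =>
    exists_measure_lt_abs_add_le hM hh (hg.exists_measure_lt_abs_le ht)

theorem MeasureTheory.Integrable.integrableOn_rearr_add (hg : Integrable g μ) (hM : 0 ≤ M)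
    (hh : ∀ᵐ x ∂μ, ‖h x‖ ≤ M) (T : ℝ) : IntegrableOn (rearr μ (g + h)) (Ioc 0 T) := by
  have hbound : IntegrableOn (fun t => rearr μ g t + M) (Ioc 0 T) :=
    (hg.integrableOn_rearr.mono_set Ioc_subset_Ioi_self).add
      (integrableOn_const measure_Ioc_lt_top.ne)
  have hanti : AntitoneOn (rearr μ (g + h)) (Ioc 0 T) :=
    (hg.rearr_add_antitoneOn hM hh).mono Ioc_subset_Ioi_self
  refine hbound.mono'
    (aemeasurable_restrict_of_antitoneOn measurableSet_Ioc hanti).aestronglyMeasurable ?_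
  refine (ae_restrict_iff' measurableSet_Ioc).mpr (ae_of_all _ fun t ht => ?_)
  rw [Real.norm_eq_abs, abs_of_nonneg (rearr_nonneg t)]
  exact rearr_add_le hM hh (hg.exists_measure_lt_abs_le ht.1)

end Rearrangement

theorem t_mul_fss_sub_fs_monotone_general (n : ℕ) (f : (Fin n → ℝ) → ℝ)
    (hf : ∃ g h : (Fin n → ℝ) → ℝ, f = g + h ∧
      MemLp g 1 volume ∧ MemLp h ⊤ volume) :
    MonotoneOn
      (fun t => t * ((1 / t) * (∫ s in Ioo (0 : ℝ) t, rearr volume f s)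
        - rearr volume f t))
      (Ioi 0) := by
  obtain ⟨g, h, rfl, hg, hh⟩ := hf
  have hg₁ : Integrable g volume := memLp_one_iff_integrable.mp hg
  have hM := ae_le_lpNorm_exponent_top hh
  refine (AntitoneOn.monotoneOn_integral_sub_mul (hg₁.rearr_add_antitoneOn lpNorm_nonneg hM)
    fun t ht => ?_).congr fun t (ht : 0 < t) => ?_
  · exact (intervalIntegrable_iff_integrableOn_Ioc_of_le ht.le).mpr
      (hg₁.integrableOn_rearr_add lpNorm_nonneg hM t)
  · field_simp

/-- For a measurable `f ∈ L₁ + L_∞` on `ℝⁿ`, with `f*` its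
non-increasing rearrangement and `f**(t) = (1/t)∫₀^t f*(s) ds`, the function
`t ↦ t(f**(t) - f*(t))` is non-decreasing on `(0,∞)`. -/
theorem t_mul_fss_sub_fs_monotone (n : ℕ) (f : (Fin n → ℝ) → ℝ)
    (hmeas : Measurable f)
    (hf : ∃ g h : (Fin n → ℝ) → ℝ, f = g + h ∧
      MemLp g 1 volume ∧ MemLp h ⊤ volume) :
    MonotoneOn
      (fun t => t * ((1 / t) * (∫ s in Ioo (0 : ℝ) t, rearr volume f s)
        - rearr volume f t))
      (Ioi 0) :=
  t_mul_fss_sub_fs_monotone_general n f hf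
end

section
/- Let 0 < η < 1 and define the operator Q_η on non-negative measurable functions on (0,∞) by (Q_η f)(t) := t^{-η} ∫_t^∞ s^{η} f(s) ds/s. Then for every non-negative measurable f on (0,∞) and every t > 0: ∫₀^t (Q_η f)(x) dx = (1/(1−η)) ∫₀^∞ min(1, t/u)^{1−η} f(u) du ≤ ∫₀^t (Q_η f*)(x) dx, where f* is the non-increasing rearrangement of f. -/
open Set MeasureTheory ENNReal

/-- The non-increasing rearrangement (with respect to Lebesgue measure on
`(0,∞)`) of a non-negative (extended-real valued) measurable function `f`. -/
noncomputable def rearrE (f : ℝ → ℝ≥0∞) (t : ℝ) : ℝ≥0∞ :=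
  sInf {s : ℝ≥0∞ | volume {x ∈ Ioi (0 : ℝ) | s < f x} ≤ ENNReal.ofReal t}

/-- The operator `Q_η`: `(Q_η f)(t) = t^{-η} ∫_t^∞ s^η f(s) ds/s`. -/
noncomputable def Qop (η : ℝ) (f : ℝ → ℝ≥0∞) (t : ℝ) : ℝ≥0∞ :=
  ENNReal.ofReal (t ^ (-η)) * ∫⁻ s in Ioi t, ENNReal.ofReal (s ^ (η - 1)) * f s

/-!
By Fubini, `∫₀ᵗ Q_η f = ∫₀^∞ k f` with `k(u) = min(t, u)^{1-η} u^{η-1} / (1-η)`, because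
`∫₀^{min(t,u)} x^{-η} dx = min(t, u)^{1-η} / (1-η)`. The kernel `k` is non-increasing, so by the
layer-cake formula `∫ k f` is an integral over `l` of `∫_{k > l} f`, where each `{k > l}` is an
initial segment of `(0, ∞)`. On an initial segment `S` the integral of `f` is at most that of `f*`,
again by layer cake: `{f* > c}` contains the initial segment of measure `|{f > c}|`, and of two
initial segments one contains the other, so `|{f > c} ∩ S| ≤ min(|{f > c}|, |S|) ≤ |{f* > c} ∩ S|`.
-/

theorem volume_ofReal_lt_inter_Ioi (c : ℝ≥0∞) :
    volume ({l : ℝ | ENNReal.ofReal l < c} ∩ Ioi 0) = c := by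
  induction c using ENNReal.recTopCoe with
  | top => simp
  | coe r =>
    have h : {l : ℝ | ENNReal.ofReal l < r} ∩ Ioi 0 = Ioo 0 (r : ℝ) := by
      ext l
      exact ⟨fun ⟨hlr, hl⟩ => ⟨hl, (ofReal_lt_coe_iff hl.le).1 hlr⟩,
        fun ⟨hl, hlr⟩ => ⟨(ofReal_lt_coe_iff hl.le).2 hlr, hl⟩⟩
    simp [h]

theorem lintegral_mul_eq_lintegral_setLIntegral_lt {α : Type*} [MeasurableSpace α]
    {μ : Measure α} [SFinite μ] {k g : α → ℝ≥0∞} (hk : Measurable k) (hg : Measurable g) :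
    ∫⁻ x, k x * g x ∂μ = ∫⁻ l in Ioi (0 : ℝ), ∫⁻ x in {x | ENNReal.ofReal l < k x}, g x ∂μ := by
  have h_level (x : α) : MeasurableSet {l : ℝ | ENNReal.ofReal l < k x} :=
    measurableSet_lt ENNReal.measurable_ofReal measurable_const
  have h_layer (x : α) : k x * g x =
      ∫⁻ l in Ioi (0 : ℝ), {l : ℝ | ENNReal.ofReal l < k x}.indicator (fun _ => g x) l := by
    rw [lintegral_indicator_const (h_level x), Measure.restrict_apply (h_level x),
      volume_ofReal_lt_inter_Ioi, mul_comm]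
  have h_meas : Measurable (Function.uncurry fun x (l : ℝ) =>
      {l : ℝ | ENNReal.ofReal l < k x}.indicator (fun _ => g x) l) :=
    (hg.comp measurable_fst).ite
      (measurableSet_lt (measurable_ofReal.comp measurable_snd) (hk.comp measurable_fst))
      measurable_const
  simp_rw [h_layer]
  rw [lintegral_lintegral_swap h_meas.aemeasurable]
  congr! 2 with l
  rw [← lintegral_indicator (measurableSet_lt measurable_const hk)]
  rfl

theorem antitone_rearrE (f : ℝ → ℝ≥0∞) : Antitone (rearrE f) :=
  fun _ _ hab => sInf_le_sInf fun _ hs => hs.trans (ofReal_le_ofReal hab)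

theorem measurable_rearrE (f : ℝ → ℝ≥0∞) : Measurable (rearrE f) :=
  (antitone_rearrE f).measurable

/-- The infimum defining `rearrE f x` is attained, by right-continuity of `c ↦ |{f > c}|`. -/
theorem lt_rearrE {f : ℝ → ℝ≥0∞} {c : ℝ≥0∞} {x : ℝ}
    (h : ENNReal.ofReal x < volume {y ∈ Ioi (0 : ℝ) | c < f y}) : c < rearrE f x := by
  by_contra! hc
  have hc_top : c ≠ ∞ := by rintro rfl; simp at h
  obtain ⟨u, hu_anti, hu_gt, hu_lim⟩ := exists_seq_strictAnti_tendsto' hc_top.lt_top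
  have h_union : {y ∈ Ioi (0 : ℝ) | c < f y} = ⋃ n, {y ∈ Ioi (0 : ℝ) | u n < f y} := by
    ext y
    simp only [mem_ofPred_eq, mem_iUnion]
    refine ⟨fun ⟨hy, hcy⟩ => ?_, fun ⟨n, hy, hny⟩ => ⟨hy, (hu_gt n).1.trans hny⟩⟩
    obtain ⟨n, hn⟩ := (hu_lim.eventually (gt_mem_nhds hcy)).exists
    exact ⟨n, hy, hn⟩
  have h_small (n : ℕ) : volume {y ∈ Ioi (0 : ℝ) | u n < f y} ≤ ENNReal.ofReal x := by
    obtain ⟨s, hs, hsu⟩ := sInf_lt_iff.mp (hc.trans_lt (hu_gt n).1)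
    refine (measure_mono ?_).trans hs
    exact fun y hy => ⟨hy.1, hsu.trans hy.2⟩
  have h_mono : Monotone fun n => {y ∈ Ioi (0 : ℝ) | u n < f y} := by
    intro m n hmn y hy
    exact ⟨hy.1, (hu_anti.antitone hmn).trans_lt hy.2⟩
  rw [h_union, h_mono.measure_iUnion] at h
  exact (iSup_le h_small).not_gt h

def IsInitialSegmentIoi (S : Set ℝ) : Prop :=
  S ⊆ Ioi 0 ∧ ∀ x ∈ S, Ioc 0 x ⊆ S

namespace IsInitialSegmentIoi

theorem total {S T : Set ℝ} (hS : IsInitialSegmentIoi S) (hT : IsInitialSegmentIoi T) :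
    S ⊆ T ∨ T ⊆ S := by
  by_contra! h
  obtain ⟨⟨s, hsS, hsT⟩, ⟨t, htT, htS⟩⟩ := And.imp not_subset.1 not_subset.1 h
  rcases le_total s t with hst | hts
  · exact hsT (hT.2 t htT ⟨hS.1 hsS, hst⟩)
  · exact htS (hS.2 s hsS ⟨hT.1 htT, hts⟩)

theorem measure_inter {S T : Set ℝ} (hS : IsInitialSegmentIoi S) (hT : IsInitialSegmentIoi T)
    (μ : Measure ℝ) : μ (S ∩ T) = min (μ S) (μ T) := by
  rcases hS.total hT with h | h
  · rw [inter_eq_left.2 h, min_eq_left (measure_mono h)]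
  · rw [inter_eq_right.2 h, min_eq_right (measure_mono h)]

theorem ofReal_lt_inter_Ioi (c : ℝ≥0∞) :
    IsInitialSegmentIoi ({x : ℝ | ENNReal.ofReal x < c} ∩ Ioi 0) :=
  ⟨inter_subset_right, fun _ hx _ hy => ⟨(ofReal_le_ofReal hy.2).trans_lt hx.1, hy.1⟩⟩

theorem lt_inter_Ioi_of_antitoneOn {k : ℝ → ℝ≥0∞} (hk : AntitoneOn k (Ioi 0)) (c : ℝ≥0∞) :
    IsInitialSegmentIoi ({x : ℝ | c < k x} ∩ Ioi 0) :=
  ⟨inter_subset_right, fun _ hx _ hy => ⟨hx.1.trans_le (hk hy.1 hx.2 hy.2), hy.1⟩⟩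

end IsInitialSegmentIoi

theorem volume_lt_inter_le_rearrE {f : ℝ → ℝ≥0∞} {S : Set ℝ} (hS : IsInitialSegmentIoi S)
    (c : ℝ≥0∞) : volume ({x | c < f x} ∩ S) ≤ volume ({x | c < rearrE f x} ∩ S) := by
  set D := volume {y ∈ Ioi (0 : ℝ) | c < f y}
  have hB := IsInitialSegmentIoi.ofReal_lt_inter_Ioi D
  calc volume ({x | c < f x} ∩ S)
      ≤ min D (volume S) :=
        le_min (measure_mono fun x hx => ⟨hS.1 hx.2, hx.1⟩) (measure_mono inter_subset_right)
    _ = volume (({x : ℝ | ENNReal.ofReal x < D} ∩ Ioi 0) ∩ S) := by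
        rw [hB.measure_inter hS, volume_ofReal_lt_inter_Ioi]
    _ ≤ volume ({x | c < rearrE f x} ∩ S) :=
        measure_mono fun x hx => ⟨lt_rearrE hx.1.1, hx.2⟩

theorem setLIntegral_le_setLIntegral_rearrE {f : ℝ → ℝ≥0∞} (hf : Measurable f) {S : Set ℝ}
    (hS : IsInitialSegmentIoi S) : ∫⁻ x in S, f x ≤ ∫⁻ x in S, rearrE f x := by
  have h_layer (g : ℝ → ℝ≥0∞) (hg : Measurable g) :
      ∫⁻ x in S, g x = ∫⁻ l in Ioi (0 : ℝ), volume ({x | ENNReal.ofReal l < g x} ∩ S) := by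
    simpa [Measure.restrict_apply (measurableSet_lt measurable_const hg)] using
      lintegral_mul_eq_lintegral_setLIntegral_lt (μ := volume.restrict S) (g := fun _ => 1) hg
        measurable_const
  rw [h_layer f hf, h_layer _ (measurable_rearrE f)]
  exact lintegral_mono fun l => volume_lt_inter_le_rearrE hS _

theorem setLIntegral_Ioi_mul_le_rearrE {k f : ℝ → ℝ≥0∞} (hk : AntitoneOn k (Ioi 0))
    (hkm : Measurable k) (hf : Measurable f) :
    ∫⁻ u in Ioi 0, k u * f u ≤ ∫⁻ u in Ioi 0, k u * rearrE f u := by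
  simp_rw [lintegral_mul_eq_lintegral_setLIntegral_lt hkm hf,
    lintegral_mul_eq_lintegral_setLIntegral_lt hkm (measurable_rearrE f),
    Measure.restrict_restrict (measurableSet_lt measurable_const hkm)]
  exact lintegral_mono fun l => setLIntegral_le_setLIntegral_rearrE hf
    (IsInitialSegmentIoi.lt_inter_Ioi_of_antitoneOn hk _)

theorem lintegral_Ioo_rpow {r c : ℝ} (hr : -1 < r) (hc : 0 ≤ c) :
    ∫⁻ x in Ioo 0 c, ENNReal.ofReal (x ^ r) = ENNReal.ofReal (c ^ (r + 1) / (r + 1)) := by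
  have hint : IntegrableOn (fun x : ℝ => x ^ r) (Ioc 0 c) := by
    simpa [intervalIntegrable_iff_integrableOn_Ioc_of_le hc] using
      intervalIntegral.intervalIntegrable_rpow' (a := 0) (b := c) hr
  rw [Measure.restrict_congr_set Ioo_ae_eq_Ioc, ← ofReal_integral_eq_lintegral_ofReal hint
    ((ae_restrict_mem measurableSet_Ioc).mono fun x hx => Real.rpow_nonneg hx.1.le r),
    ← intervalIntegral.integral_of_le hc, integral_rpow (Or.inl hr),
    Real.zero_rpow (by linarith), sub_zero]

theorem lintegral_setLIntegral_Ioi_swap {μ : Measure ℝ} [SFinite μ] {F : ℝ → ℝ → ℝ≥0∞}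
    (hF : Measurable (Function.uncurry F)) :
    ∫⁻ x, (∫⁻ s in Ioi x, F x s) ∂μ = ∫⁻ s, ∫⁻ x in Iio s, F x s ∂μ := by
  simp_rw [← lintegral_indicator measurableSet_Ioi, ← lintegral_indicator measurableSet_Iio]
  refine lintegral_lintegral_swap (μ := μ) (ν := volume) (Measurable.aemeasurable ?_)
  exact hF.ite (measurableSet_lt measurable_fst measurable_snd) measurable_const

theorem min_rpow_mul_rpow_neg {t s p : ℝ} (ht : 0 ≤ t) (hs : 0 < s) :
    min t s ^ p * s ^ (-p) = min 1 (t / s) ^ p := by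
  rw [Real.rpow_neg hs.le, ← div_eq_mul_inv, ← Real.div_rpow (le_min ht hs.le) hs.le,
    ← min_div_div_right hs.le, div_self hs.ne', min_comm]

theorem lintegral_Ioo_Qop {η t : ℝ} (hη : η < 1) (ht : 0 ≤ t) {f : ℝ → ℝ≥0∞}
    (hf : Measurable f) :
    ∫⁻ x in Ioo 0 t, Qop η f x =
      ENNReal.ofReal (1 / (1 - η)) *
        ∫⁻ u in Ioi 0, ENNReal.ofReal (min 1 (t / u) ^ (1 - η)) * f u := by
  set F : ℝ → ℝ → ℝ≥0∞ := fun x s =>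
    ENNReal.ofReal (x ^ (-η)) * (ENNReal.ofReal (s ^ (η - 1)) * f s)
  have hF : Measurable (Function.uncurry F) := by fun_prop
  have h_inner (s : ℝ) : ∫⁻ x in Iio s ∩ Ioo 0 t, F x s = (Ioi 0).indicator (fun s =>
      ENNReal.ofReal (1 / (1 - η)) * (ENNReal.ofReal (min 1 (t / s) ^ (1 - η)) * f s)) s := by
    rw [Iio_inter_Ioo]
    rcases le_or_gt s 0 with hs | hs
    · rw [indicator_of_notMem (notMem_Ioi.2 hs),
        Ioo_eq_empty ((min_le_left s t).trans hs).not_gt, Measure.restrict_empty,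
        lintegral_zero_measure]
    have h_pos : 0 ≤ min s t := le_min hs.le ht
    have h_kernel : min s t ^ (-η + 1) / (-η + 1) * s ^ (η - 1) =
        1 / (1 - η) * min 1 (t / s) ^ (1 - η) := by
      have h := min_rpow_mul_rpow_neg (p := 1 - η) ht hs
      rw [neg_sub] at h
      rw [min_comm, ← h, neg_add_eq_sub]
      ring
    rw [indicator_of_mem (mem_Ioi.2 hs), lintegral_mul_const _ (by fun_prop),
      lintegral_Ioo_rpow (by linarith) h_pos, ← mul_assoc,
      ← ofReal_mul (div_nonneg (Real.rpow_nonneg h_pos _) (by linarith)), h_kernel,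
      ofReal_mul (by positivity), mul_assoc]
  calc ∫⁻ x in Ioo 0 t, Qop η f x
      = ∫⁻ x in Ioo 0 t, ∫⁻ s in Ioi x, F x s := by
        have h_meas : Measurable fun s => ENNReal.ofReal (s ^ (η - 1)) * f s := by fun_prop
        simp_rw [Qop, F, lintegral_const_mul _ h_meas]
    _ = ∫⁻ s, ∫⁻ x in Iio s ∩ Ioo 0 t, F x s := by
        rw [lintegral_setLIntegral_Ioi_swap hF]
        simp_rw [Measure.restrict_restrict measurableSet_Iio]
    _ = _ := by
        simp_rw [h_inner]
        rw [lintegral_indicator measurableSet_Ioi, lintegral_const_mul _ (by fun_prop)]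

theorem antitoneOn_min_one_div_rpow {t p : ℝ} (ht : 0 ≤ t) (hp : 0 ≤ p) :
    AntitoneOn (fun u => min 1 (t / u) ^ p) (Ioi 0) := fun _ ha _ hb hab =>
  Real.rpow_le_rpow (le_min zero_le_one (div_nonneg ht hb.le))
    (min_le_min_left 1 (div_le_div_of_nonneg_left ht ha hab)) hp

theorem Qop_integral_identity_and_bound_general (η : ℝ) (hη1 : η < 1)
    (f : ℝ → ℝ≥0∞) (hf : Measurable f) (t : ℝ) (ht : 0 < t) :
    (∫⁻ x in Ioo (0 : ℝ) t, Qop η f x) =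
      ENNReal.ofReal (1 / (1 - η)) *
        ∫⁻ u in Ioi (0 : ℝ), ENNReal.ofReal (min 1 (t / u) ^ (1 - η)) * f u ∧
    ENNReal.ofReal (1 / (1 - η)) *
        (∫⁻ u in Ioi (0 : ℝ), ENNReal.ofReal (min 1 (t / u) ^ (1 - η)) * f u) ≤
      ∫⁻ x in Ioo (0 : ℝ) t, Qop η (rearrE f) x := by
  have h_kernel : AntitoneOn (fun u => ENNReal.ofReal (min 1 (t / u) ^ (1 - η))) (Ioi 0) :=
    ENNReal.ofReal_mono.comp_antitoneOn (antitoneOn_min_one_div_rpow ht.le (by linarith))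
  refine ⟨lintegral_Ioo_Qop hη1 ht.le hf, ?_⟩
  rw [lintegral_Ioo_Qop hη1 ht.le (measurable_rearrE f)]
  gcongr _ * ?_
  exact setLIntegral_Ioi_mul_le_rearrE h_kernel (by fun_prop) hf

/-- For `0 < η < 1` and every non-negative measurable `f` on
`(0,∞)`, and every `t > 0`:
`∫₀^t (Q_η f)(x) dx = (1/(1−η)) ∫₀^∞ min(1, t/u)^{1−η} f(u) du ≤ ∫₀^t (Q_η f*)(x) dx`,
where `f*` is the non-increasing rearrangement of `f`. -/
theorem Qop_integral_identity_and_bound (η : ℝ) (hη0 : 0 < η) (hη1 : η < 1)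
    (f : ℝ → ℝ≥0∞) (hf : Measurable f) (t : ℝ) (ht : 0 < t) :
    (∫⁻ x in Ioo (0 : ℝ) t, Qop η f x) =
      ENNReal.ofReal (1 / (1 - η)) *
        ∫⁻ u in Ioi (0 : ℝ), ENNReal.ofReal (min 1 (t / u) ^ (1 - η)) * f u ∧
    ENNReal.ofReal (1 / (1 - η)) *
        (∫⁻ u in Ioi (0 : ℝ), ENNReal.ofReal (min 1 (t / u) ^ (1 - η)) * f u) ≤
      ∫⁻ x in Ioo (0 : ℝ) t, Qop η (rearrE f) x :=
  Qop_integral_identity_and_bound_general η hη1 f hf t ht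
end

section
/- Let (X₀, X₁) be a compatible couple of Banach spaces and let F₀ be a Banach lattice over ((0,∞), dt/t) such that Ξ(t) := ‖min(·, t)‖_{F₀} satisfies Ξ(1) < ∞. Let φ be the generalized reverse function of Ξ. Then for all t ∈ (Ξ(0), Ξ(∞)) and all f ∈ (X₀,X₁)_{F₀} + X₁: K(f, t; (X₀,X₁)_{F₀}, X₁) ≳ ‖K(f, s; X₀, X₁) χ_{(0,φ(t))}(s)‖_{F₀} + K(f, φ(t); X₀, X₁) · ‖χ_{(φ(t),∞)}‖_{F₀}, with an implicit constant independent of f and t. -/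
/-!
Write `Ξ(τ) = N(min(·, τ))`. Every `τ ∈ (0, φ)` lies outside the set defining `φ`, so
`Ξ(τ) ≤ t`; since `a · min(s, φ) ≤ min(s, aφ)` for `a ∈ (0, 1)`, this passes to the
limit `Ξ(φ) ≤ t` without any continuity of `Ξ`. For a decomposition `f = g + h` with
`h ∈ X₁`, subadditivity and monotonicity of `K` give
`K(f, min(s, φ)) ≤ K(g, s) + min(s, φ) ‖h‖₁`, and both terms on the left of the estimate
are dominated pointwise by `K(f, min(s, φ))`. Applying `N` bounds each of them by
`N(K(g, ·)) + Ξ(φ) ‖h‖₁ ≤ N(K(g, ·)) + t ‖h‖₁`, so the constant `2` works.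
-/

open Set ENNReal

/-- The Peetre K-functional of a compatible couple `(X₀, X₁)`, realized as two
submodules of a common ambient space `Z` carrying norms `n₀` and `n₁`. -/
noncomputable def Kfun {Z : Type*} [AddCommGroup Z] [Module ℝ Z]
    (X₀ X₁ : Submodule ℝ Z) (n₀ n₁ : Z → ℝ) (f : Z) (t : ℝ) : ℝ :=
  sInf {r : ℝ | ∃ f₀ ∈ X₀, ∃ f₁ ∈ X₁, f = f₀ + f₁ ∧ r = n₀ f₀ + t * n₁ f₁}

section KFunctional

variable {Z : Type*} [AddCommGroup Z] [Module ℝ Z] {X₀ X₁ : Submodule ℝ Z} {n₀ n₁ : Z → ℝ}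

lemma Kfun_nonneg (h₀nn : ∀ z, 0 ≤ n₀ z) (h₁nn : ∀ z, 0 ≤ n₁ z) (f : Z) {t : ℝ}
    (ht : 0 ≤ t) : 0 ≤ Kfun X₀ X₁ n₀ n₁ f t :=
  Real.sInf_nonneg <| by
    rintro r ⟨f₀, -, f₁, -, -, rfl⟩
    exact add_nonneg (h₀nn _) (mul_nonneg ht (h₁nn _))

lemma Kfun_le (h₀nn : ∀ z, 0 ≤ n₀ z) (h₁nn : ∀ z, 0 ≤ n₁ z) {f f₀ f₁ : Z}
    (h₀ : f₀ ∈ X₀) (h₁ : f₁ ∈ X₁) (hf : f = f₀ + f₁) {t : ℝ} (ht : 0 ≤ t) :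
    Kfun X₀ X₁ n₀ n₁ f t ≤ n₀ f₀ + t * n₁ f₁ := by
  refine csInf_le ⟨0, ?_⟩ ⟨f₀, h₀, f₁, h₁, hf, rfl⟩
  rintro r ⟨f₀, -, f₁, -, -, rfl⟩
  exact add_nonneg (h₀nn _) (mul_nonneg ht (h₁nn _))

lemma Kfun_le_Kfun_add (h₀nn : ∀ z, 0 ≤ n₀ z) (h₁nn : ∀ z, 0 ≤ n₁ z)
    (h₁add : ∀ x y, n₁ (x + y) ≤ n₁ x + n₁ y) {f g h : Z} (hfgh : f = g + h)
    (hg : g ∈ X₀ ⊔ X₁) (hh : h ∈ X₁) {s s' : ℝ} (hs : 0 ≤ s) (hss' : s ≤ s') :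
    Kfun X₀ X₁ n₀ n₁ f s ≤ Kfun X₀ X₁ n₀ n₁ g s' + s * n₁ h := by
  obtain ⟨g₀, hg₀, g₁, hg₁, rfl⟩ := Submodule.mem_sup.mp hg
  rw [← sub_le_iff_le_add]
  refine le_csInf ⟨_, g₀, hg₀, g₁, hg₁, rfl, rfl⟩ ?_
  rintro r ⟨f₀, h₀, f₁, h₁, hdec, rfl⟩
  have hf : f = f₀ + (f₁ + h) := by rw [hfgh, hdec, add_assoc]
  have := Kfun_le h₀nn h₁nn h₀ (add_mem h₁ hh) hf hs
  nlinarith [h₁add f₁ h, h₁nn f₁]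

end KFunctional

section LatticeNorm

variable {N : (ℝ → ℝ) → ℝ≥0∞}
  (hlat : ∀ u v : ℝ → ℝ, (∀ s ∈ Ioi (0 : ℝ), |u s| ≤ |v s|) → N u ≤ N v)
include hlat

lemma lattice_norm_mono {u v : ℝ → ℝ} (huv : ∀ s > 0, 0 ≤ u s ∧ u s ≤ v s) : N u ≤ N v :=
  hlat u v fun s hs => abs_le_abs_of_nonneg (huv s hs).1 (huv s hs).2

lemma fundamental_mono {a b : ℝ} (ha : 0 ≤ a) (hab : a ≤ b) :
    N (fun s => min s a) ≤ N (fun s => min s b) :=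
  lattice_norm_mono hlat fun s hs => ⟨le_min hs.le ha, min_le_min_left s hab⟩

lemma sInf_fundamental_gt_pos {t : ℝ≥0∞}
    (hlow : (⨅ τ : Ioi (0 : ℝ), N (fun s => min s τ.1)) < t)
    (hhigh : t < (⨆ τ : Ioi (0 : ℝ), N (fun s => min s τ.1))) :
    0 < sInf {τ : ℝ | 0 < τ ∧ t < N (fun s => min s τ)} := by
  obtain ⟨⟨τ₀, hτ₀⟩, hτ₀t⟩ := lt_iSup_iff.mp hhigh
  obtain ⟨⟨τ₁, hτ₁⟩, hτ₁t⟩ := iInf_lt_iff.mp hlow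
  refine lt_of_lt_of_le hτ₁ (le_csInf ⟨τ₀, hτ₀, hτ₀t⟩ ?_)
  rintro τ ⟨hτ, hτt⟩
  by_contra! hlt
  exact (fundamental_mono hlat hτ.le hlt.le).not_gt (hτ₁t.trans hτt)

lemma fundamental_le_of_eq_sInf
    (hNhom : ∀ (c : ℝ) (u : ℝ → ℝ), 0 ≤ c → N (fun s => c * u s) = ENNReal.ofReal c * N u)
    {t : ℝ≥0∞} {φ : ℝ} (hφ : 0 < φ)
    (hφdef : φ = sInf {τ : ℝ | 0 < τ ∧ t < N (fun s => min s τ)}) :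
    N (fun s => min s φ) ≤ t := by
  have below : ∀ τ, 0 < τ → τ < φ → N (fun s => min s τ) ≤ t := fun τ hτ hτφ =>
    not_lt.mp fun ht => hτφ.not_ge (hφdef ▸ csInf_le ⟨0, fun _ h => h.1.le⟩ ⟨hτ, ht⟩)
  refine ENNReal.le_of_forall_lt_one_mul_le fun a ha => ?_
  obtain rfl | ha0 := eq_or_ne a 0
  · simp
  have ha_top : a ≠ ⊤ := (ha.trans one_lt_top).ne
  have hc0 : 0 < a.toReal := ENNReal.toReal_pos ha0 ha_top
  have hc1 : a.toReal < 1 := by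
    simpa using (ENNReal.toReal_lt_toReal ha_top one_ne_top).mpr ha
  rw [← ENNReal.ofReal_toReal ha_top, ← hNhom _ _ hc0.le]
  refine (lattice_norm_mono hlat (v := fun s => min s (a.toReal * φ))
    fun s hs => ⟨by positivity, ?_⟩).trans (below _ (by positivity) (by nlinarith))
  rw [mul_min_of_nonneg _ _ hc0.le]
  exact min_le_min_right _ (by nlinarith)

end LatticeNorm

lemma holmstedt_lower_le_two_mul {Z : Type*} [AddCommGroup Z] [Module ℝ Z]
    {X₀ X₁ : Submodule ℝ Z} {n₀ n₁ : Z → ℝ}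
    (h₀nn : ∀ z, 0 ≤ n₀ z) (h₁nn : ∀ z, 0 ≤ n₁ z)
    (h₁add : ∀ x y, n₁ (x + y) ≤ n₁ x + n₁ y) {N : (ℝ → ℝ) → ℝ≥0∞}
    (hlat : ∀ u v : ℝ → ℝ, (∀ s ∈ Ioi (0 : ℝ), |u s| ≤ |v s|) → N u ≤ N v)
    (hNadd : ∀ u v : ℝ → ℝ, N (u + v) ≤ N u + N v)
    (hNhom : ∀ (c : ℝ) (u : ℝ → ℝ), 0 ≤ c → N (fun s => c * u s) = ENNReal.ofReal c * N u)
    {t : ℝ≥0∞} {φ : ℝ} (hφ : 0 < φ) (hΞφ : N (fun s => min s φ) ≤ t)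
    {f g h : Z} (hfgh : f = g + h) (hg : g ∈ X₀ ⊔ X₁) (hh : h ∈ X₁) :
    N (fun s => indicator (Ioo 0 φ) (fun s => Kfun X₀ X₁ n₀ n₁ f s) s)
        + ENNReal.ofReal (Kfun X₀ X₁ n₀ n₁ f φ) * N (indicator (Ioi φ) 1)
      ≤ 2 * (N (fun s => Kfun X₀ X₁ n₀ n₁ g s) + t * ENNReal.ofReal (n₁ h)) := by
  set K := Kfun X₀ X₁ n₀ n₁
  have hK : ∀ u, 0 ≤ u → 0 ≤ K f u := fun u hu => Kfun_nonneg h₀nn h₁nn f hu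
  have hdom : ∀ u : ℝ → ℝ, (∀ s > 0, 0 ≤ u s ∧ u s ≤ K f (min s φ)) →
      N u ≤ N (fun s => K g s) + t * ENNReal.ofReal (n₁ h) := by
    intro u hu
    calc N u ≤ N ((fun s => K g s) + fun s => n₁ h * min s φ) := by
          refine lattice_norm_mono hlat fun s hs => ⟨(hu s hs).1, (hu s hs).2.trans ?_⟩
          have := Kfun_le_Kfun_add h₀nn h₁nn h₁add hfgh hg hh (le_min hs.le hφ.le)
            (min_le_left s φ)
          simpa only [Pi.add_apply, mul_comm] using this
      _ ≤ N (fun s => K g s) + ENNReal.ofReal (n₁ h) * N (fun s => min s φ) := by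
          rw [← hNhom _ _ (h₁nn h)]
          exact hNadd _ _
      _ ≤ N (fun s => K g s) + t * ENNReal.ofReal (n₁ h) := by
          rw [mul_comm t]
          gcongr
  rw [← hNhom _ _ (hK φ hφ.le), two_mul]
  refine add_le_add (hdom _ fun s hs => ?_) (hdom _ fun s hs => ?_)
  · by_cases hsφ : s < φ
    · rw [indicator_of_mem (show s ∈ Ioo 0 φ from ⟨hs, hsφ⟩), min_eq_left hsφ.le]
      exact ⟨hK s hs.le, le_rfl⟩
    · rw [indicator_of_notMem fun hmem => hsφ hmem.2]
      exact ⟨le_rfl, hK _ (le_min hs.le hφ.le)⟩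
  · by_cases hsφ : φ < s
    · rw [indicator_of_mem (mem_Ioi.mpr hsφ), Pi.one_apply, mul_one, min_eq_right hsφ.le]
      exact ⟨hK φ hφ.le, le_rfl⟩
    · rw [indicator_of_notMem (notMem_Ioi.mpr (not_lt.mp hsφ)), mul_zero]
      exact ⟨le_rfl, hK _ (le_min hs.le hφ.le)⟩

theorem holmstedt_lower_general {Z : Type*} [AddCommGroup Z] [Module ℝ Z]
    (X₀ X₁ : Submodule ℝ Z) (n₀ n₁ : Z → ℝ)
    (h₀nn : ∀ z, 0 ≤ n₀ z) (h₁nn : ∀ z, 0 ≤ n₁ z)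
    (h₁add : ∀ x y, n₁ (x + y) ≤ n₁ x + n₁ y)
    (N : (ℝ → ℝ) → ℝ≥0∞)
    (hlat : ∀ u v : ℝ → ℝ, (∀ s ∈ Ioi (0 : ℝ), |u s| ≤ |v s|) → N u ≤ N v)
    (hNadd : ∀ u v : ℝ → ℝ, N (u + v) ≤ N u + N v)
    (hNhom : ∀ (c : ℝ) (u : ℝ → ℝ), 0 ≤ c →
      N (fun s => c * u s) = ENNReal.ofReal c * N u) :
    ∃ C : ℝ≥0∞, 0 < C ∧ C ≠ ⊤ ∧ ∀ (t : ℝ≥0∞) (f : Z),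
      (⨅ τ : Ioi (0 : ℝ), N (fun s => min s τ.1)) < t →
      t < (⨆ τ : Ioi (0 : ℝ), N (fun s => min s τ.1)) →
      (∃ g h : Z, f = g + h ∧ g ∈ X₀ ⊔ X₁ ∧
        N (fun s => Kfun X₀ X₁ n₀ n₁ g s) ≠ ⊤ ∧ h ∈ X₁) →
      ∀ φ : ℝ, φ = sInf {τ : ℝ | 0 < τ ∧ t < N (fun s => min s τ)} →
      N (fun s => indicator (Ioo 0 φ) (fun s => Kfun X₀ X₁ n₀ n₁ f s) s)
          + ENNReal.ofReal (Kfun X₀ X₁ n₀ n₁ f φ) * N (indicator (Ioi φ) 1)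
        ≤ C * sInf {r : ℝ≥0∞ | ∃ g h : Z, f = g + h ∧ g ∈ X₀ ⊔ X₁ ∧ h ∈ X₁ ∧
            r = N (fun s => Kfun X₀ X₁ n₀ n₁ g s) + t * ENNReal.ofReal (n₁ h)} := by
  refine ⟨2, by norm_num, by norm_num, fun t f hlow hhigh _ φ hφdef => ?_⟩
  have hφ : 0 < φ := hφdef ▸ sInf_fundamental_gt_pos hlat hlow hhigh
  have hΞφ := fundamental_le_of_eq_sInf hlat hNhom hφ hφdef
  rw [← ENNReal.div_le_iff' two_ne_zero ofNat_ne_top]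
  refine le_sInf ?_
  rintro r ⟨g, h, hfgh, hg, hh, rfl⟩
  rw [ENNReal.div_le_iff' two_ne_zero ofNat_ne_top]
  exact holmstedt_lower_le_two_mul h₀nn h₁nn h₁add hlat hNadd hNhom hφ hΞφ hfgh hg hh

/-- lower estimate in the abstract Holmstedt formula:
Let `(X₀,X₁)` be a compatible couple of Banach spaces, `F₀` a Banach lattice
over `((0,∞), dt/t)` with norm functional `N`, with fundamental function
`Ξ(τ) := ‖min(·,τ)‖_{F₀}` satisfying `Ξ(1) < ∞`, and `φ` the generalized
reverse of `Ξ`. Then for all `t ∈ (Ξ(0), Ξ(∞))` and `f ∈ (X₀,X₁)_{F₀} + X₁`: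
`‖K(f,·;X₀,X₁)χ_{(0,φ(t))}‖_{F₀} + K(f,φ(t);X₀,X₁)‖χ_{(φ(t),∞)}‖_{F₀}
  ≲ K(f,t;(X₀,X₁)_{F₀},X₁)`, with a constant independent of `f` and `t`.
Here `(X₀,X₁)_{F₀}` has norm `f ↦ N(K(f,·;X₀,X₁))`, `Ξ(0)` and `Ξ(∞)` are the
infimum and supremum of `Ξ` over `(0,∞)`, and the K-functional of the couple
`((X₀,X₁)_{F₀}, X₁)` is computed as an infimum over decompositions. -/
theorem holmstedt_lower {Z : Type*} [AddCommGroup Z] [Module ℝ Z]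
    (X₀ X₁ : Submodule ℝ Z) (n₀ n₁ : Z → ℝ)
    (h₀nn : ∀ z, 0 ≤ n₀ z) (h₁nn : ∀ z, 0 ≤ n₁ z)
    (h₀z : n₀ 0 = 0) (h₁z : n₁ 0 = 0)
    (h₀add : ∀ x y, n₀ (x + y) ≤ n₀ x + n₀ y)
    (h₁add : ∀ x y, n₁ (x + y) ≤ n₁ x + n₁ y)
    (h₀hom : ∀ (c : ℝ) (x : Z), n₀ (c • x) = |c| * n₀ x)
    (h₁hom : ∀ (c : ℝ) (x : Z), n₁ (c • x) = |c| * n₁ x)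
    (N : (ℝ → ℝ) → ℝ≥0∞)
    (hlat : ∀ u v : ℝ → ℝ, (∀ s ∈ Ioi (0 : ℝ), |u s| ≤ |v s|) → N u ≤ N v)
    (hNadd : ∀ u v : ℝ → ℝ, N (u + v) ≤ N u + N v)
    (hNhom : ∀ (c : ℝ) (u : ℝ → ℝ), 0 ≤ c →
      N (fun s => c * u s) = ENNReal.ofReal c * N u)
    (hΞ1 : N (fun s => min s 1) ≠ ⊤) :
    ∃ C : ℝ≥0∞, 0 < C ∧ C ≠ ⊤ ∧ ∀ (t : ℝ≥0∞) (f : Z),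
      (⨅ τ : Ioi (0 : ℝ), N (fun s => min s τ.1)) < t →
      t < (⨆ τ : Ioi (0 : ℝ), N (fun s => min s τ.1)) →
      (∃ g h : Z, f = g + h ∧ g ∈ X₀ ⊔ X₁ ∧
        N (fun s => Kfun X₀ X₁ n₀ n₁ g s) ≠ ⊤ ∧ h ∈ X₁) →
      ∀ φ : ℝ, φ = sInf {τ : ℝ | 0 < τ ∧ t < N (fun s => min s τ)} →
      N (fun s => indicator (Ioo 0 φ) (fun s => Kfun X₀ X₁ n₀ n₁ f s) s)
          + ENNReal.ofReal (Kfun X₀ X₁ n₀ n₁ f φ) * N (indicator (Ioi φ) 1)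
        ≤ C * sInf {r : ℝ≥0∞ | ∃ g h : Z, f = g + h ∧ g ∈ X₀ ⊔ X₁ ∧ h ∈ X₁ ∧
            r = N (fun s => Kfun X₀ X₁ n₀ n₁ g s) + t * ENNReal.ofReal (n₁ h)} :=
  holmstedt_lower_general X₀ X₁ n₀ n₁ h₀nn h₁nn h₁add N hlat hNadd hNhom
end
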